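/- For every semistandard Young tableau T of rectangular shape with k rows and m columns and entries in [n], there exists a unique multiset {S_1, ..., S_m} of m one-column tableaux (i.e., k-element subsets of [n] listed increasingly) that are pairwise noncrossing and satisfy T = S_1 ∪ ... ∪ S_m, where ∪ denotes the row-wise multiset union sorted increasingly. -/

import Mathlib

/-!
Induct on the number of rows. Deleting the last entry of every column of a decomposition of the
first `k + 1` rows leaves a decomposition of the first `k` rows, which is unique by induction, so
everything comes down to attaching the entries of row `k + 1` to the columns of that
decomposition. If `P < Q` in colex order and `a` is the last position where they differ, the
columns extended by new last entries `v` and `w` remain noncrossing iff `w ≤ v` or `v ≤ Q_a`.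
Consequently the colex-largest column must receive the least new entry exceeding it, which gives
uniqueness, and attaching entries greedily in decreasing colex order succeeds because column
strictness of the tableau provides the required Hall-type counting condition.
-/

open Finset

/-- `allLT I J` means `max I < min J` (vacuously true if either set is empty). -/
def allLT (I J : Finset ℕ) : Prop := ∀ i ∈ I, ∀ j ∈ J, i < j

/-- `I` and `J` are weakly separated. -/
def WeaklySeparated (I J : Finset ℕ) : Prop :=
  (∃ I1 I2 : Finset ℕ, Disjoint I1 I2 ∧ I1 ∪ I2 = I \ J ∧
      allLT I1 (J \ I) ∧ allLT (J \ I) I2) ∨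
  (∃ J1 J2 : Finset ℕ, Disjoint J1 J2 ∧ J1 ∪ J2 = J \ I ∧
      allLT J1 (I \ J) ∧ allLT (I \ J) J2)

/-- the set `{i_a, i_{a+1}, ..., i_b}` of entries of `I` in (1-indexed) positions `a` to `b`. -/
def posSlice (I : Finset ℕ) (a b : ℕ) : Finset ℕ :=
  I.filter fun x => a ≤ (I.filter (· ≤ x)).card ∧ (I.filter (· ≤ x)).card ≤ b

/-- the pair of `k`-subsets `I`, `J` is noncrossing. -/
def Noncrossing (k : ℕ) (I J : Finset ℕ) : Prop :=
  ∀ a b : ℕ, 1 ≤ a → a < b → b ≤ k →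
    WeaklySeparated (posSlice I a b) (posSlice J a b) ∨
    posSlice I (a + 1) (b - 1) ≠ posSlice J (a + 1) (b - 1)

/-- the `a`-th smallest entry of `I` (1-indexed). -/
def nth (I : Finset ℕ) (a : ℕ) : ℕ := (I.sort (· ≤ ·)).getD (a - 1) 0

/-- `T` is a rectangular semistandard Young tableau with entries in `[n]`. -/
def IsSSYT {k m : ℕ} (n : ℕ) (T : Fin k → Fin m → ℕ) : Prop :=
  (∀ i j, T i j ∈ Finset.Icc 1 n) ∧
  (∀ i (j j' : Fin m), j ≤ j' → T i j ≤ T i j') ∧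
  (∀ (i i' : Fin k) j, i < i' → T i j < T i' j)

lemma Multiset.pairwise_iff_forall_of_refl {α : Type*} {r : α → α → Prop} [Std.Symm r]
    (hr : ∀ a, r a a) {s : Multiset α} : s.Pairwise r ↔ ∀ a ∈ s, ∀ b ∈ s, r a b := by
  refine ⟨fun h a ha b hb => ?_, fun h => ⟨s.toList, (Multiset.coe_toList s).symm,
    List.pairwise_of_forall_mem_list fun a ha b hb =>
      h a (by simpa using ha) b (by simpa using hb)⟩⟩
  by_cases hab : a = b
  · exact hab ▸ hr a
  · exact h.forall ha hb hab

/-- For `x ∈ P`, the 1-indexed position of `x` in `P`, as counted in `posSlice`. -/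
def pos (P : Finset ℕ) (x : ℕ) : ℕ := #{y ∈ P | y ≤ x}

section Positions

variable {P Q : Finset ℕ} {k a b x : ℕ}

lemma nth_eq_orderEmbOfFin (i : Fin #P) : nth P (i + 1) = P.orderEmbOfFin rfl i := by
  simp [nth, orderEmbOfFin_apply]

lemma pos_orderEmbOfFin (i : Fin #P) : pos P (P.orderEmbOfFin rfl i) = i + 1 := by
  have : {y ∈ P | y ≤ P.orderEmbOfFin rfl i} =
      (Iic i).map (P.orderEmbOfFin rfl).toEmbedding := by
    ext y
    simp only [mem_filter, mem_map, mem_Iic, RelEmbedding.coe_toEmbedding]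
    constructor
    · rintro ⟨hy, hle⟩
      obtain ⟨j, rfl⟩ : y ∈ Set.range (P.orderEmbOfFin rfl) := by simpa using hy
      exact ⟨j, (P.orderEmbOfFin rfl).le_iff_le.mp hle, rfl⟩
    · rintro ⟨j, hj, rfl⟩
      exact ⟨orderEmbOfFin_mem P rfl j, (P.orderEmbOfFin rfl).le_iff_le.mpr hj⟩
  rw [pos, this, card_map, Fin.card_Iic]

lemma nth_mem (ha : 1 ≤ a) (haP : a ≤ #P) : nth P a ∈ P := by
  obtain ⟨i, rfl⟩ : ∃ i : Fin #P, a = i + 1 := ⟨⟨a - 1, by omega⟩, by simp; omega⟩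
  rw [nth_eq_orderEmbOfFin]
  exact orderEmbOfFin_mem P rfl i

lemma nth_lt_nth (ha : 1 ≤ a) (hab : a < b) (hbP : b ≤ #P) : nth P a < nth P b := by
  obtain ⟨i, rfl⟩ : ∃ i : Fin #P, a = i + 1 := ⟨⟨a - 1, by omega⟩, by simp; omega⟩
  obtain ⟨j, rfl⟩ : ∃ j : Fin #P, b = j + 1 := ⟨⟨b - 1, by omega⟩, by simp; omega⟩
  rw [nth_eq_orderEmbOfFin, nth_eq_orderEmbOfFin]
  exact (P.orderEmbOfFin rfl).strictMono (by omega)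

lemma nth_le_nth (ha : 1 ≤ a) (hab : a ≤ b) (hbP : b ≤ #P) : nth P a ≤ nth P b := by
  rcases hab.eq_or_lt with rfl | hab
  · rfl
  · exact (nth_lt_nth ha hab hbP).le

lemma pos_nth (ha : 1 ≤ a) (haP : a ≤ #P) : pos P (nth P a) = a := by
  obtain ⟨i, rfl⟩ : ∃ i : Fin #P, a = i + 1 := ⟨⟨a - 1, by omega⟩, by simp; omega⟩
  rw [nth_eq_orderEmbOfFin, pos_orderEmbOfFin]

lemma nth_pos (hx : x ∈ P) : nth P (pos P x) = x := by
  obtain ⟨i, rfl⟩ : x ∈ Set.range (P.orderEmbOfFin rfl) := by simpa using hx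
  rw [pos_orderEmbOfFin, nth_eq_orderEmbOfFin]

lemma one_le_pos (hx : x ∈ P) : 1 ≤ pos P x :=
  card_pos.mpr ⟨x, mem_filter.mpr ⟨hx, le_rfl⟩⟩

lemma pos_le_card : pos P x ≤ #P := card_filter_le _ _

lemma le_nth_card (hx : x ∈ P) : x ≤ nth P #P := by
  conv_lhs => rw [← nth_pos hx]
  exact nth_le_nth (one_le_pos hx) pos_le_card le_rfl

lemma mem_posSlice : x ∈ posSlice P a b ↔ x ∈ P ∧ a ≤ pos P x ∧ pos P x ≤ b := by
  simp [posSlice, pos]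

lemma posSlice_eq_image (ha : 1 ≤ a) (hbP : b ≤ #P) :
    posSlice P a b = (Icc a b).image (nth P) := by
  ext x
  simp only [mem_posSlice, mem_image, mem_Icc]
  constructor
  · rintro ⟨hx, h⟩
    exact ⟨pos P x, h, nth_pos hx⟩
  · rintro ⟨c, hc, rfl⟩
    rw [pos_nth (by omega) (by omega)]
    exact ⟨nth_mem (by omega) (by omega), hc⟩

lemma image_nth_Icc : (Icc 1 #P).image (nth P) = P := by
  rw [← posSlice_eq_image le_rfl le_rfl]
  ext x
  simp only [mem_posSlice, and_iff_left_iff_imp]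
  exact fun hx => ⟨one_le_pos hx, pos_le_card⟩

lemma eq_of_nth_eq (hP : #P = k) (hQ : #Q = k)
    (h : ∀ a, 1 ≤ a → a ≤ k → nth P a = nth Q a) : P = Q := by
  rw [← image_nth_Icc (P := P), ← image_nth_Icc (P := Q), hP, hQ]
  exact image_congr fun c hc => by simp only [coe_Icc, Set.mem_Icc] at hc; exact h c hc.1 hc.2

lemma posSlice_congr (ha : 1 ≤ a) (hbP : b ≤ #P) (hbQ : b ≤ #Q)
    (h : ∀ c, a ≤ c → c ≤ b → nth P c = nth Q c) : posSlice P a b = posSlice Q a b := by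
  rw [posSlice_eq_image ha hbP, posSlice_eq_image ha hbQ]
  exact image_congr fun c hc => by simp only [coe_Icc, Set.mem_Icc] at hc; exact h c hc.1 hc.2

lemma posSlice_eq_insert (ha : 1 ≤ a) (haP : a ≤ #P) :
    posSlice P a #P = insert (nth P a) (posSlice P (a + 1) #P) := by
  rw [posSlice_eq_image ha le_rfl, posSlice_eq_image (by omega) le_rfl, ← image_insert,
    insert_Icc_add_one_left_eq_Icc haP]

end Positions

section InsertLast

variable {P : Finset ℕ} {k v a b x : ℕ}

lemma pos_insert_of_mem (hv : ∀ y ∈ P, y < v) (hx : x ∈ P) :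
    pos (insert v P) x = pos P x := by
  rw [pos, pos, filter_insert, if_neg (hv x hx).not_ge]

lemma pos_insert_self (hv : ∀ y ∈ P, y < v) : pos (insert v P) v = #P + 1 := by
  rw [pos, filter_insert, if_pos le_rfl, filter_true_of_mem fun y hy => (hv y hy).le,
    card_insert_of_notMem fun h => (hv v h).false]

lemma nth_insert_of_le (hv : ∀ y ∈ P, y < v) (ha : 1 ≤ a) (haP : a ≤ #P) :
    nth (insert v P) a = nth P a := by
  have h := nth_pos (mem_insert_of_mem (b := v) (nth_mem ha haP))
  rwa [pos_insert_of_mem hv (nth_mem ha haP), pos_nth ha haP] at h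

lemma nth_insert_self (hP : #P = k) (hv : ∀ y ∈ P, y < v) : nth (insert v P) (k + 1) = v := by
  rw [← hP, ← pos_insert_self hv, nth_pos (mem_insert_self v P)]

lemma posSlice_subset : posSlice P a b ⊆ P := filter_subset _ _

lemma posSlice_insert_of_le (hv : ∀ y ∈ P, y < v) (hbP : b ≤ #P) :
    posSlice (insert v P) a b = posSlice P a b := by
  ext x
  simp only [mem_posSlice, mem_insert]
  constructor
  · rintro ⟨rfl | hx, h⟩
    · rw [pos_insert_self hv] at h; omega
    · rw [pos_insert_of_mem hv hx] at h
      exact ⟨hx, h⟩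
  · rintro ⟨hx, h⟩
    rw [pos_insert_of_mem hv hx]
    exact ⟨Or.inr hx, h⟩

lemma posSlice_insert_self (hP : #P = k) (hv : ∀ y ∈ P, y < v) (ha : a ≤ k + 1) :
    posSlice (insert v P) a (k + 1) = insert v (posSlice P a k) := by
  subst hP
  ext x
  simp only [mem_posSlice, mem_insert]
  constructor
  · rintro ⟨rfl | hx, h⟩
    · exact Or.inl rfl
    · rw [pos_insert_of_mem hv hx] at h
      exact Or.inr ⟨hx, h.1, pos_le_card⟩
  · rintro (rfl | ⟨hx, h⟩)
    · rw [pos_insert_self hv]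
      exact ⟨Or.inl rfl, ha, le_rfl⟩
    · rw [pos_insert_of_mem hv hx]
      exact ⟨Or.inr hx, h.1, by omega⟩

end InsertLast

section EraseLast

variable {S : Finset ℕ} {k : ℕ}

lemma insert_erase_nth_card (hS : #S = k + 1) :
    insert (nth S (k + 1)) (S.erase (nth S (k + 1))) = S :=
  insert_erase (nth_mem (by omega) hS.ge)

lemma card_erase_nth_card (hS : #S = k + 1) : #(S.erase (nth S (k + 1))) = k := by
  rw [card_erase_of_mem (nth_mem (by omega) hS.ge), hS, Nat.add_sub_cancel]

lemma lt_nth_card_of_mem_erase (hS : #S = k + 1) :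
    ∀ x ∈ S.erase (nth S (k + 1)), x < nth S (k + 1) := by
  intro x hx
  obtain ⟨hne, hx⟩ := mem_erase.mp hx
  rw [← nth_pos hx] at hne ⊢
  have : pos S x ≠ k + 1 := fun h => hne (by rw [h])
  exact nth_lt_nth (one_le_pos hx) (by have := pos_le_card (P := S) (x := x); omega) hS.ge

end EraseLast

section WeakSeparation

variable {I J C : Finset ℕ}

lemma WeaklySeparated.symm (h : WeaklySeparated I J) : WeaklySeparated J I :=
  Or.symm h

lemma weaklySeparated_of_forall
    (h : ∀ x ∈ I \ J, ∀ y ∈ J \ I, ∀ z ∈ J \ I, y < x → z < x) :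
    WeaklySeparated I J := by
  refine Or.inl ⟨{x ∈ I \ J | ∀ y ∈ J \ I, x < y}, {x ∈ I \ J | ¬∀ y ∈ J \ I, x < y},
    disjoint_filter_filter_not _ _ _, filter_union_filter_not_eq _ _, ?_, ?_⟩
  · intro x hx y hy
    exact (mem_filter.mp hx).2 y hy
  · intro z hz x hx
    obtain ⟨hx, hn⟩ := mem_filter.mp hx
    push Not at hn
    obtain ⟨y, hy, hyx⟩ := hn
    have hne : y ≠ x := fun h => (mem_sdiff.mp hy).2 (h ▸ (mem_sdiff.mp hx).1)
    exact h x hx y hy z hz (lt_of_le_of_ne hyx hne)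

lemma weaklySeparated_insert_insert (v w : ℕ) : WeaklySeparated (insert v C) (insert w C) := by
  apply weaklySeparated_of_forall
  grind

lemma not_weaklySeparated {p q v w : ℕ} (hp : p ∈ I \ J) (hq : q ∈ J \ I) (hv : v ∈ I \ J)
    (hw : w ∈ J \ I) (hpq : p < q) (hqv : q < v) (hvw : v < w) : ¬WeaklySeparated I J := by
  rintro (⟨I1, I2, -, hu, h1, h2⟩ | ⟨J1, J2, -, hu, h1, h2⟩)
  · rw [← hu, mem_union] at hv
    rcases hv with hv | hv
    · exact (h1 v hv q hq).not_gt hqv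
    · exact (h2 w hw v hv).not_gt hvw
  · rw [← hu, mem_union] at hq
    rcases hq with hq | hq
    · exact (h1 q hq p hp).not_gt hpq
    · exact (h2 v hv q hq).not_gt hqv

/-- `p < q` are the entries of two columns at the last position where they differ, `C` is their
common part above it, and `v`, `w` are new last entries. -/
lemma weaklySeparated_insert_insert_iff {p q v w : ℕ} (hpq : p < q) (hqC : ∀ c ∈ C, q < c)
    (hv : ∀ x ∈ insert p C, x < v) (hw : ∀ x ∈ insert q C, x < w) :
    WeaklySeparated (insert v (insert p C)) (insert w (insert q C)) ↔ w ≤ v ∨ v ≤ q := by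
  -- The two set differences lie in `{p, v}` and `{q, w}`: only four numbers are compared.
  constructor
  · intro hws
    by_contra! h
    refine not_weaklySeparated (p := p) (q := q) (v := v) (w := w) ?_ ?_ ?_ ?_ hpq h.2 h.1 hws <;>
      grind
  · intro h
    apply weaklySeparated_of_forall
    grind

end WeakSeparation

section Noncrossing

variable {k a v w x : ℕ} {P Q : Finset ℕ}

lemma Noncrossing.symm (h : Noncrossing k P Q) : Noncrossing k Q P := fun a b h1 h2 h3 =>
  (h a b h1 h2 h3).imp WeaklySeparated.symm Ne.symm

lemma noncrossing_self (k : ℕ) (P : Finset ℕ) : Noncrossing k P P := fun _ _ _ _ _ =>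
  Or.inl (weaklySeparated_of_forall (by simp))

instance (k : ℕ) : Std.Symm (Noncrossing k) := ⟨fun _ _ => Noncrossing.symm⟩

/-- The windows of `Noncrossing (k + 1) (insert v P) (insert w Q)` ending at the new last
position. -/
def CompatibleLast (k : ℕ) (P : Finset ℕ) (v : ℕ) (Q : Finset ℕ) (w : ℕ) : Prop :=
  ∀ a, 1 ≤ a → a ≤ k →
    WeaklySeparated (insert v (posSlice P a k)) (insert w (posSlice Q a k)) ∨
    posSlice P (a + 1) k ≠ posSlice Q (a + 1) k

lemma CompatibleLast.symm (h : CompatibleLast k P v Q w) : CompatibleLast k Q w P v :=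
  fun a h1 h2 => (h a h1 h2).imp WeaklySeparated.symm Ne.symm

lemma compatibleLast_self (v w : ℕ) : CompatibleLast k P v P w :=
  fun _ _ _ => Or.inl (weaklySeparated_insert_insert v w)

lemma noncrossing_insert_insert_iff (hP : #P = k) (hQ : #Q = k) (hv : ∀ x ∈ P, x < v)
    (hw : ∀ x ∈ Q, x < w) :
    Noncrossing (k + 1) (insert v P) (insert w Q) ↔
      Noncrossing k P Q ∧ CompatibleLast k P v Q w := by
  constructor
  · intro h
    refine ⟨fun a b h1 h2 h3 => ?_, fun a h1 h2 => ?_⟩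
    · have := h a b h1 h2 (by omega)
      rwa [posSlice_insert_of_le hv (by omega), posSlice_insert_of_le hw (by omega),
        posSlice_insert_of_le hv (by omega), posSlice_insert_of_le hw (by omega)] at this
    · have := h a (k + 1) h1 (by omega) le_rfl
      rwa [posSlice_insert_self hP hv (by omega), posSlice_insert_self hQ hw (by omega),
        Nat.add_sub_cancel, posSlice_insert_of_le hv (by omega),
        posSlice_insert_of_le hw (by omega)] at this
  · rintro ⟨hnc, hc⟩ a b h1 h2 h3
    rcases h3.eq_or_lt with rfl | h3
    · rw [posSlice_insert_self hP hv (by omega), posSlice_insert_self hQ hw (by omega),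
        Nat.add_sub_cancel, posSlice_insert_of_le hv (by omega),
        posSlice_insert_of_le hw (by omega)]
      exact hc a h1 (by omega)
    · rw [posSlice_insert_of_le hv (by omega), posSlice_insert_of_le hw (by omega),
        posSlice_insert_of_le hv (by omega), posSlice_insert_of_le hw (by omega)]
      exact hnc a b h1 h2 (by omega)

def LastDiffAt (k : ℕ) (P Q : Finset ℕ) (a : ℕ) : Prop :=
  1 ≤ a ∧ a ≤ k ∧ nth P a < nth Q a ∧ ∀ c, a < c → c ≤ k → nth P c = nth Q c

lemma le_nth_or_mem_of_nth_eq (hP : #P = k) (hQ : #Q = k) (ha : 1 ≤ a) (hak : a ≤ k)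
    (heq : ∀ c, a < c → c ≤ k → nth P c = nth Q c) (hx : x ∈ P) :
    x ≤ nth P a ∨ (nth Q a < x ∧ x ∈ Q) := by
  have hpos : pos P x ≤ k := hP ▸ pos_le_card
  rw [← nth_pos hx]
  rcases le_or_gt (pos P x) a with h | h
  · exact Or.inl (nth_le_nth (one_le_pos hx) h (by omega))
  · rw [heq _ h hpos]
    exact Or.inr ⟨nth_lt_nth (by omega) h (by omega), nth_mem (by omega) (by omega)⟩

lemma LastDiffAt.nth_notMem (hP : #P = k) (hQ : #Q = k) (h : LastDiffAt k P Q a) :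
    nth Q a ∉ P := fun hq => by
  obtain ⟨ha, hak, hlt, heq⟩ := h
  rcases le_nth_or_mem_of_nth_eq hP hQ ha hak heq hq with hle | hgt <;> omega

lemma LastDiffAt.colex_lt (hP : #P = k) (hQ : #Q = k) (h : LastDiffAt k P Q a) :
    toColex P < toColex Q := by
  have hq := h.nth_notMem hP hQ
  obtain ⟨ha, hak, hlt, heq⟩ := h
  rw [Colex.toColex_lt_toColex_iff_exists_forall_lt]
  refine ⟨nth Q a, nth_mem ha (by omega), hq, fun b hb hbQ => ?_⟩
  rcases le_nth_or_mem_of_nth_eq hP hQ ha hak heq hb with hle | hgt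
  · exact hle.trans_lt hlt
  · exact absurd hgt.2 hbQ

lemma exists_lastDiffAt_of_colex_lt (hP : #P = k) (hQ : #Q = k) (h : toColex P < toColex Q) :
    ∃ a, LastDiffAt k P Q a := by
  set D := {c ∈ Icc 1 k | nth P c ≠ nth Q c}
  have hD : D.Nonempty := by
    by_contra hD
    refine h.ne (congrArg _ (eq_of_nth_eq hP hQ fun c h1 h2 => ?_))
    by_contra hc
    exact hD ⟨c, by simp [D, h1, h2, hc]⟩
  obtain ⟨a, ha, hmax⟩ := D.exists_max_image id hD
  simp only [D, mem_filter, mem_Icc] at ha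
  have heq : ∀ c, a < c → c ≤ k → nth P c = nth Q c := fun c hac hck => by
    by_contra hc
    exact (hmax c (by simp [D, hck, hc]; omega)).not_gt hac
  rcases lt_or_gt_of_ne ha.2 with hlt | hgt
  · exact ⟨a, ha.1.1, ha.1.2, hlt, heq⟩
  · exact absurd h (LastDiffAt.colex_lt hQ hP ⟨ha.1.1, ha.1.2, hgt,
      fun c h1 h2 => (heq c h1 h2).symm⟩).not_gt

lemma compatibleLast_iff (hP : #P = k) (hQ : #Q = k) (hv : ∀ x ∈ P, x < v)
    (hw : ∀ x ∈ Q, x < w) (h : LastDiffAt k P Q a) :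
    CompatibleLast k P v Q w ↔ w ≤ v ∨ v ≤ nth Q a := by
  obtain ⟨h1, hak, hlt, heq⟩ := h
  have hsame : ∀ c, a < c → posSlice P c k = posSlice Q c k := fun c hc =>
    posSlice_congr (by omega) (by omega) (by omega) fun d hd _ => heq d (by omega) (by omega)
  have hwindow : WeaklySeparated (insert v (posSlice P a k)) (insert w (posSlice Q a k)) ↔
      w ≤ v ∨ v ≤ nth Q a := by
    have hPa := posSlice_eq_insert (P := P) h1 (by omega)
    have hQa := posSlice_eq_insert (P := Q) h1 (by omega)
    rw [hP] at hPa
    rw [hQ, ← hsame (a + 1) (by omega)] at hQa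
    rw [hPa, hQa]
    refine weaklySeparated_insert_insert_iff hlt (fun c hc => ?_)
      (fun x hx => hv x (posSlice_subset (hPa ▸ hx)))
      (fun x hx => hw x (posSlice_subset (hQa ▸ hx)))
    rw [hsame (a + 1) (by omega), mem_posSlice] at hc
    rw [← nth_pos hc.1]
    exact nth_lt_nth h1 (by omega) (by omega)
  constructor
  · intro hc
    rcases hc a h1 hak with hws | hne
    · exact hwindow.mp hws
    · exact absurd (hsame (a + 1) (by omega)) hne
  · intro hvw c hc1 hck
    rcases lt_trichotomy c a with hca | rfl | hac
    · refine Or.inr fun hslice => LastDiffAt.nth_notMem hP hQ ⟨h1, hak, hlt, heq⟩ ?_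
      have hq : nth Q a ∈ posSlice Q (c + 1) k := by
        rw [mem_posSlice, pos_nth h1 (by omega)]
        exact ⟨nth_mem h1 (by omega), by omega, hak⟩
      exact posSlice_subset (hslice ▸ hq)
    · exact Or.inl (hwindow.mpr hvw)
    · rw [hsame c hac]
      exact Or.inl (weaklySeparated_insert_insert v w)

end Noncrossing

section Extension

open Multiset

variable {k : ℕ} {F : Multiset (Finset ℕ)} {R : Multiset ℕ} {Pm : Finset ℕ}
  {N N₁ N₂ : Multiset (Finset ℕ × ℕ)} {p : Finset ℕ × ℕ}

/-- A pair `(P, v)` stands for the column `insert v P`. -/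
def IsExtension (k : ℕ) (F : Multiset (Finset ℕ)) (R : Multiset ℕ)
    (N : Multiset (Finset ℕ × ℕ)) : Prop :=
  N.map Prod.fst = F ∧ N.map Prod.snd = R ∧ (∀ p ∈ N, ∀ x ∈ p.1, x < p.2) ∧
    ∀ p ∈ N, ∀ q ∈ N, CompatibleLast k p.1 p.2 q.1 q.2

lemma IsExtension.fst_mem (h : IsExtension k F R N) (hp : p ∈ N) : p.1 ∈ F :=
  h.1 ▸ mem_map_of_mem _ hp

lemma IsExtension.snd_mem (h : IsExtension k F R N) (hp : p ∈ N) : p.2 ∈ R :=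
  h.2.1 ▸ mem_map_of_mem _ hp

lemma IsExtension.of_cons (h : IsExtension k F R (p ::ₘ N)) :
    IsExtension k (F.erase p.1) (R.erase p.2) N := by
  obtain ⟨h1, h2, h3, h4⟩ := h
  simp only [Multiset.map_cons, Multiset.forall_mem_cons] at h1 h2 h3 h4
  exact ⟨by rw [← h1, erase_cons_head], by rw [← h2, erase_cons_head], h3.2,
    fun q hq => (h4.2 q hq).2⟩

lemma IsExtension.cons (h : IsExtension k F R N) (hp : ∀ x ∈ p.1, x < p.2)
    (hc : ∀ q ∈ N, CompatibleLast k p.1 p.2 q.1 q.2) :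
    IsExtension k (p.1 ::ₘ F) (p.2 ::ₘ R) (p ::ₘ N) := by
  obtain ⟨h1, h2, h3, h4⟩ := h
  refine ⟨by rw [Multiset.map_cons, h1], by rw [Multiset.map_cons, h2], ?_, ?_⟩ <;>
    simp only [Multiset.forall_mem_cons]
  · exact ⟨hp, h3⟩
  · exact ⟨⟨compatibleLast_self _ _, hc⟩, fun q hq => ⟨(hc q hq).symm, h4 q hq⟩⟩

/-- Junk value `0` if no entry of `R` exceeds every element of `P`. -/
noncomputable def minAbove (R : Multiset ℕ) (P : Finset ℕ) : ℕ :=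
  sInf {x | x ∈ R ∧ ∀ y ∈ P, y < x}

lemma minAbove_spec {P : Finset ℕ} (h : ∃ x ∈ R, ∀ y ∈ P, y < x) :
    minAbove R P ∈ R ∧ ∀ y ∈ P, y < minAbove R P :=
  Nat.sInf_mem (s := {x | x ∈ R ∧ ∀ y ∈ P, y < x}) h

lemma minAbove_le {P : Finset ℕ} {x : ℕ} (hx : x ∈ R) (hxP : ∀ y ∈ P, y < x) :
    minAbove R P ≤ x :=
  Nat.sInf_le ⟨hx, hxP⟩

lemma exists_colex_max (hF : F ≠ 0) : ∃ P ∈ F, ∀ Q ∈ F, toColex Q ≤ toColex P := by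
  obtain ⟨P, hP, hmax⟩ := F.toFinset.exists_max_image toColex (toFinset_nonempty.mpr hF)
  exact ⟨P, mem_toFinset.mp hP, fun Q hQ => hmax Q (mem_toFinset.mpr hQ)⟩

lemma IsExtension.mem_minAbove (hF : ∀ P ∈ F, #P = k) (h : IsExtension k F R N) (hPm : Pm ∈ F)
    (hmax : ∀ Q ∈ F, toColex Q ≤ toColex Pm) : (Pm, minAbove R Pm) ∈ N := by
  rw [← h.1] at hPm
  obtain ⟨⟨P, u⟩, hpN, hP⟩ := mem_map.mp hPm
  obtain rfl : P = Pm := hP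
  have hP : #P = k := hF P (h.fst_mem hpN)
  have hu : ∀ x ∈ P, x < u := h.2.2.1 _ hpN
  obtain ⟨hvR, hvP⟩ := minAbove_spec ⟨u, h.snd_mem hpN, hu⟩
  obtain ⟨⟨Q, v⟩, hqN, hv⟩ :=
    mem_map.mp (show minAbove R P ∈ N.map Prod.snd by rwa [h.2.1])
  obtain rfl : v = minAbove R P := hv
  have hQ := hF Q (h.fst_mem hqN)
  rcases (hmax Q (h.fst_mem hqN)).eq_or_lt with hQP | hQP
  · rwa [toColex_inj.mp hQP] at hqN
  · obtain ⟨a, ha⟩ := exists_lastDiffAt_of_colex_lt hQ hP hQP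
    rcases (compatibleLast_iff hQ hP (h.2.2.1 _ hqN) hu ha).mp (h.2.2.2 _ hqN _ hpN) with
      hle | hle
    · obtain rfl : u = minAbove R P := le_antisymm hle (minAbove_le (h.snd_mem hpN) hu)
      exact hpN
    · exact absurd hle (hvP _ (nth_mem ha.1 (by rw [hP]; exact ha.2.1))).not_ge

lemma IsExtension.unique (hF : ∀ P ∈ F, #P = k) (h₁ : IsExtension k F R N₁)
    (h₂ : IsExtension k F R N₂) : N₁ = N₂ := by
  induction hn : card F generalizing F R N₁ N₂ with
  | zero =>
    have hF0 : F = 0 := card_eq_zero.mp hn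
    rw [map_eq_zero.mp (h₁.1.trans hF0), map_eq_zero.mp (h₂.1.trans hF0)]
  | succ n ih =>
    obtain ⟨Pm, hPm, hmax⟩ := exists_colex_max (F := F) (by rintro rfl; simp at hn)
    obtain ⟨N₁, rfl⟩ := exists_cons_of_mem (h₁.mem_minAbove hF hPm hmax)
    obtain ⟨N₂, rfl⟩ := exists_cons_of_mem (h₂.mem_minAbove hF hPm hmax)
    rw [ih (fun P hP => hF P (mem_of_mem_erase hP)) h₁.of_cons h₂.of_cons
      (by rw [card_erase_of_mem hPm, hn, Nat.pred_succ])]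

/-- Hall's condition for giving each column of `F` a larger entry of `R`. -/
def HallCondition (F : Multiset (Finset ℕ)) (R : Multiset ℕ) : Prop :=
  ∀ t, F.countP (fun P => ∃ x ∈ P, t ≤ x) ≤ R.countP (t < ·)

lemma HallCondition.erase (h : HallCondition F R) (hPm : Pm ∈ F)
    (hmax : ∀ Q ∈ F, toColex Q ≤ toColex Pm) {v : ℕ} (hv : v ∈ R) :
    HallCondition (F.erase Pm) (R.erase v) := by
  intro t
  by_cases hreach : ∃ x ∈ Pm, t ≤ x
  · have hF := countP_cons_of_pos (p := fun P => ∃ x ∈ P, t ≤ x) (F.erase Pm) hreach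
    have hR := countP_cons (p := (t < ·)) v (R.erase v)
    rw [cons_erase hPm] at hF
    rw [cons_erase hv] at hR
    have := h t
    split_ifs at hR <;> omega
  · push Not at hreach
    rw [countP_eq_zero.mpr fun Q hQ => ?_]
    · exact Nat.zero_le _
    push Not
    exact Colex.forall_lt_mono (hmax Q (mem_of_mem_erase hQ)) hreach

lemma compatibleLast_minAbove {Q : Finset ℕ} {w : ℕ} (hPm : #Pm = k) (hQ : #Q = k)
    (hQPm : toColex Q ≤ toColex Pm) (hw : w ∈ R) (hwQ : ∀ x ∈ Q, x < w)
    (hv : ∀ x ∈ Pm, x < minAbove R Pm) : CompatibleLast k Pm (minAbove R Pm) Q w := by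
  rcases hQPm.eq_or_lt with h | h
  · rw [toColex_inj.mp h]
    exact compatibleLast_self _ _
  obtain ⟨a, ha⟩ := exists_lastDiffAt_of_colex_lt hQ hPm h
  refine ((compatibleLast_iff hQ hPm hwQ hv ha).mpr ?_).symm
  by_cases hwPm : ∀ x ∈ Pm, x < w
  · exact Or.inl (minAbove_le hw hwPm)
  push Not at hwPm
  obtain ⟨y, hy, hwy⟩ := hwPm
  obtain ⟨h1, hak, -, heq⟩ := ha
  rcases le_nth_or_mem_of_nth_eq hPm hQ h1 hak (fun c h1 h2 => (heq c h1 h2).symm) hy with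
    hle | hmem
  · exact Or.inr (hwy.trans hle)
  · exact absurd (hwQ y hmem.2) hwy.not_gt

lemma exists_isExtension (hF : ∀ P ∈ F, #P = k) (hcard : card R = card F)
    (hHall : HallCondition F R) : ∃ N, IsExtension k F R N := by
  induction hn : card F generalizing F R with
  | zero =>
    rw [card_eq_zero.mp hn, card_eq_zero.mp (hcard.trans hn)]
    exact ⟨0, by simp [IsExtension]⟩
  | succ n ih =>
    obtain ⟨Pm, hPm, hmax⟩ := exists_colex_max (F := F) (by rintro rfl; simp at hn)
    have hfeas : ∃ x ∈ R, ∀ y ∈ Pm, y < x := by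
      rcases Pm.eq_empty_or_nonempty with rfl | hne
      · obtain ⟨x, hx⟩ := card_pos_iff_exists_mem.mp (by omega : 0 < card R)
        exact ⟨x, hx, by simp⟩
      · obtain ⟨x, hx, hlt⟩ := countP_pos.mp <| (countP_pos_of_mem hPm
          ⟨_, Pm.max'_mem hne, le_rfl⟩).trans_le (hHall (Pm.max' hne))
        exact ⟨x, hx, fun y hy => (le_max' Pm y hy).trans_lt hlt⟩
    obtain ⟨hvR, hvPm⟩ := minAbove_spec hfeas
    obtain ⟨N, hN⟩ := ih (fun P hP => hF P (mem_of_mem_erase hP))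
      (by rw [card_erase_of_mem hvR, card_erase_of_mem hPm, hcard])
      (hHall.erase hPm hmax hvR) (by rw [card_erase_of_mem hPm, hn, Nat.pred_succ])
    have hext := hN.cons (p := (Pm, minAbove R Pm)) hvPm fun q hq =>
      compatibleLast_minAbove (hF Pm hPm) (hF q.1 (mem_of_mem_erase (hN.fst_mem hq)))
        (hmax _ (mem_of_mem_erase (hN.fst_mem hq))) (mem_of_mem_erase (hN.snd_mem hq))
        (hN.2.2.1 q hq) hvPm
    exact ⟨_, by rwa [cons_erase hPm, cons_erase hvR] at hext⟩

end Extension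

section Decomposition

variable {k m : ℕ} {R : ℕ → Multiset ℕ} {M F : Multiset (Finset ℕ)}
  {N : Multiset (Finset ℕ × ℕ)}

/-- Rows are 0-indexed: `R a` consists of the `(a + 1)`-th entries of the columns. -/
def IsDecomposition (k m : ℕ) (R : ℕ → Multiset ℕ) (M : Multiset (Finset ℕ)) : Prop :=
  Multiset.card M = m ∧ (∀ S ∈ M, #S = k) ∧
    (∀ S ∈ M, ∀ T ∈ M, Noncrossing k S T) ∧ ∀ a < k, M.map (nth · (a + 1)) = R a

def joinLast (p : Finset ℕ × ℕ) : Finset ℕ := insert p.2 p.1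

def splitLast (k : ℕ) (S : Finset ℕ) : Finset ℕ × ℕ :=
  (S.erase (nth S (k + 1)), nth S (k + 1))

lemma isDecomposition_map_joinLast_iff (hN : ∀ p ∈ N, #p.1 = k ∧ ∀ x ∈ p.1, x < p.2) :
    IsDecomposition (k + 1) m R (N.map joinLast) ↔
      IsDecomposition k m R (N.map Prod.fst) ∧ IsExtension k (N.map Prod.fst) (R k) N := by
  have hcard : ∀ p ∈ N, #(joinLast p) = k + 1 := fun p hp => by
    rw [joinLast, card_insert_of_notMem fun h => ((hN p hp).2 _ h).false, (hN p hp).1]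
  have hnc : ∀ p ∈ N, ∀ q ∈ N, Noncrossing (k + 1) (joinLast p) (joinLast q) ↔
      Noncrossing k p.1 q.1 ∧ CompatibleLast k p.1 p.2 q.1 q.2 := fun p hp q hq =>
    noncrossing_insert_insert_iff (hN p hp).1 (hN q hq).1 (hN p hp).2 (hN q hq).2
  have hrow : ∀ a < k,
      (N.map joinLast).map (nth · (a + 1)) = (N.map Prod.fst).map (nth · (a + 1)) := by
    intro a ha
    rw [Multiset.map_map, Multiset.map_map]
    exact Multiset.map_congr rfl fun p hp =>
      nth_insert_of_le (hN p hp).2 (by omega) (by rw [(hN p hp).1]; omega)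
  have hlast : (N.map joinLast).map (nth · (k + 1)) = N.map Prod.snd := by
    rw [Multiset.map_map]
    exact Multiset.map_congr rfl fun p hp => nth_insert_self (hN p hp).1 (hN p hp).2
  simp only [IsDecomposition, IsExtension, Multiset.forall_mem_map_iff, Multiset.card_map,
    Nat.forall_lt_succ_right]
  constructor
  · rintro ⟨h1, -, h3, h4, h5⟩
    refine ⟨⟨h1, fun p hp => (hN p hp).1,
      fun p hp q hq => ((hnc p hp q hq).mp (h3 p hp q hq)).1,
      fun a ha => (hrow a ha).symm.trans (h4 a ha)⟩, trivial, hlast.symm.trans h5,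
      fun p hp => (hN p hp).2, fun p hp q hq => ((hnc p hp q hq).mp (h3 p hp q hq)).2⟩
  · rintro ⟨⟨h1, -, h3, h4⟩, -, h5, -, h6⟩
    exact ⟨h1, hcard, fun p hp q hq => (hnc p hp q hq).mpr ⟨h3 p hp q hq, h6 p hp q hq⟩,
      fun a ha => (hrow a ha).trans (h4 a ha), hlast.trans h5⟩

lemma map_splitLast (hM : ∀ S ∈ M, #S = k + 1) :
    (∀ p ∈ M.map (splitLast k), #p.1 = k ∧ ∀ x ∈ p.1, x < p.2) ∧
      (M.map (splitLast k)).map joinLast = M := by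
  refine ⟨Multiset.forall_mem_map_iff.mpr fun S hS => ⟨card_erase_nth_card (hM S hS),
    lt_nth_card_of_mem_erase (hM S hS)⟩, ?_⟩
  rw [Multiset.map_map]
  conv_rhs => rw [← Multiset.map_id M]
  exact Multiset.map_congr rfl fun S hS => insert_erase_nth_card (hM S hS)

lemma hallCondition_of_card_eq_zero (hF : ∀ P ∈ F, #P = 0) (R' : Multiset ℕ) :
    HallCondition F R' := fun t => by
  rw [Multiset.countP_eq_zero.mpr fun P hP => by simp [Finset.card_eq_zero.mp (hF P hP)]]
  exact Nat.zero_le _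

lemma IsDecomposition.hallCondition (hF : IsDecomposition (k + 1) m R F)
    (hdom : ∀ t, (R k).countP (t ≤ ·) ≤ (R (k + 1)).countP (t < ·)) :
    HallCondition F (R (k + 1)) := fun t => by
  have hreach : F.countP (fun P => ∃ x ∈ P, t ≤ x) = (R k).countP (t ≤ ·) := by
    rw [← hF.2.2.2 k (by omega), Multiset.countP_map, Multiset.countP_eq_card_filter]
    congr 1
    refine Multiset.filter_congr fun P hP =>
      ⟨fun ⟨x, hx, htx⟩ => ?_, fun h => ⟨_, ?_, h⟩⟩
    · exact htx.trans (hF.2.1 P hP ▸ le_nth_card hx)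
    · exact nth_mem (by omega) (by rw [hF.2.1 P hP])
  rw [hreach]
  exact hdom t

theorem existsUnique_isDecomposition (hcard : ∀ a < k, Multiset.card (R a) = m)
    (hdom : ∀ a, a + 1 < k → ∀ t, (R a).countP (t ≤ ·) ≤ (R (a + 1)).countP (t < ·)) :
    ∃! M, IsDecomposition k m R M := by
  induction k with
  | zero =>
    refine ⟨Multiset.replicate m ∅, ⟨Multiset.card_replicate m ∅, ?_, ?_, by simp⟩,
      fun M hM => Multiset.eq_replicate.mpr
        ⟨hM.1, fun S hS => Finset.card_eq_zero.mp (hM.2.1 S hS)⟩⟩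
    · intro S hS
      rw [Multiset.eq_of_mem_replicate hS, card_empty]
    · intro S _ T _
      exact fun _ _ _ _ h => absurd h (by omega)
  | succ k ih =>
    obtain ⟨F, hF, hFuniq⟩ :=
      ih (fun a ha => hcard a (by omega)) (fun a ha => hdom a (by omega))
    have hHall : HallCondition F (R k) := by
      rcases k with _ | k
      · exact hallCondition_of_card_eq_zero hF.2.1 _
      · exact hF.hallCondition (hdom k (by omega))
    obtain ⟨N, hN⟩ := exists_isExtension hF.2.1 (by rw [hcard k (by omega), hF.1]) hHall
    have hNabove : ∀ p ∈ N, #p.1 = k ∧ ∀ x ∈ p.1, x < p.2 :=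
      fun p hp => ⟨hF.2.1 _ (hN.fst_mem hp), hN.2.2.1 p hp⟩
    refine ⟨N.map joinLast, (isDecomposition_map_joinLast_iff hNabove).mpr
      ⟨by rwa [hN.1], by rwa [hN.1]⟩, fun M hM => ?_⟩
    obtain ⟨hsplit, hjoin⟩ := map_splitLast hM.2.1
    rw [← hjoin] at hM ⊢
    obtain ⟨hF', hext⟩ := (isDecomposition_map_joinLast_iff hsplit).mp hM
    rw [hFuniq _ hF'] at hext
    rw [hext.unique hF.2.1 hN]

lemma IsDecomposition.exists_mem_row (hM : IsDecomposition k m R M) {S : Finset ℕ} (hS : S ∈ M)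
    {x : ℕ} (hx : x ∈ S) : ∃ a < k, x ∈ R a := by
  have hpos : pos S x ≤ k := hM.2.1 S hS ▸ pos_le_card
  refine ⟨pos S x - 1, by have := one_le_pos hx; omega, ?_⟩
  rw [← hM.2.2.2 _ (by have := one_le_pos hx; omega), Nat.sub_add_cancel (one_le_pos hx)]
  have hmem := Multiset.mem_map_of_mem (nth · (pos S x)) hS
  rwa [nth_pos hx] at hmem

end Decomposition

section Tableau

variable {k m n : ℕ} {T : Fin k → Fin m → ℕ}

def rowMultiset (T : Fin k → Fin m → ℕ) (a : ℕ) : Multiset ℕ :=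
  if h : a < k then univ.val.map (T ⟨a, h⟩) else 0

lemma IsSSYT.countP_rowMultiset_le (hT : IsSSYT n T) {a : ℕ} (ha : a + 1 < k) (t : ℕ) :
    (rowMultiset T a).countP (t ≤ ·) ≤ (rowMultiset T (a + 1)).countP (t < ·) := by
  rw [rowMultiset, rowMultiset, dif_pos (by omega), dif_pos ha, Multiset.countP_map,
    Multiset.countP_map]
  exact Multiset.card_le_card (Multiset.monotone_filter_right _ fun j h =>
    h.trans_lt (hT.2.2 _ _ j (Fin.mk_lt_mk.mpr (by omega))))

lemma IsSSYT.isDecomposition_iff (hT : IsSSYT n T) (M : Multiset (Finset ℕ)) :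
    (Multiset.card M = m ∧ (∀ S ∈ M, #S = k ∧ S ⊆ Icc 1 n) ∧
      M.Pairwise (Noncrossing k) ∧ ∀ a : Fin k, univ.val.map (T a) = M.map (nth · (a + 1))) ↔
      IsDecomposition k m (rowMultiset T) M := by
  have hrow (a : Fin k) : rowMultiset T a = univ.val.map (T a) := dif_pos a.2
  rw [Multiset.pairwise_iff_forall_of_refl (noncrossing_self k)]
  constructor
  · rintro ⟨h1, h2, h3, h4⟩
    exact ⟨h1, fun S hS => (h2 S hS).1, h3,
      fun a ha => (h4 ⟨a, ha⟩).symm.trans (hrow ⟨a, ha⟩).symm⟩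
  · intro hM
    refine ⟨hM.1, fun S hS => ⟨hM.2.1 S hS, fun x hx => ?_⟩, hM.2.2.1,
      fun a => by rw [← hrow, hM.2.2.2 a a.2]⟩
    obtain ⟨a, ha, hxa⟩ := hM.exists_mem_row hS hx
    rw [hrow ⟨a, ha⟩] at hxa
    obtain ⟨j, -, rfl⟩ := Multiset.mem_map.mp hxa
    exact hT.1 _ j

end Tableau

/-- Every rectangular SSYT is the union of a unique multiset of pairwise noncrossing
one-column tableaux. -/
theorem unique_noncrossing_decomposition
    (k m n : ℕ) (T : Fin k → Fin m → ℕ) (hT : IsSSYT n T) :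
    ∃! M : Multiset (Finset ℕ),
      Multiset.card M = m ∧
      (∀ S ∈ M, S.card = k ∧ S ⊆ Finset.Icc 1 n) ∧
      M.Pairwise (Noncrossing k) ∧
      (∀ a : Fin k,
        (Finset.univ.val.map (T a)) = M.map (fun S => nth S ((a : ℕ) + 1))) :=
  (existsUnique_congr hT.isDecomposition_iff).mpr <|
    existsUnique_isDecomposition (fun a ha => by simp [rowMultiset, ha])
      fun a ha => hT.countP_rowMultiset_le ha
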